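/- If ξ : ℝ → ℝ is measurable and bounded, x ↦ ∫ ξ(y)·φ_σ(y − x) dy has at most n zeros on an interval I whenever ξ changes sign at most n times, unless the integral transform is identically zero. (Special case of the oscillation theorem for the Gaussian kernel, n = 1: if there exists y₀ such that ξ(y) ≤ 0 for y ≤ y₀ and ξ(y) ≥ 0 for y ≥ y₀, and Ξ(x) = ∫ ξ(y)φ_σ(y − x) dy is not identically zero, then Ξ has at most one zero in ℝ.) -/

import Mathlib

/-!
Completing the square gives `φ_σ(y - x) = φ_σ(x - y₀) · e^{-(y-y₀)²/2σ²} · e^{(x-y₀)(y-y₀)/σ²}`,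
so `Ξ(x)` is a positive multiple of `L((x - y₀)/σ²)`, where `L(t) = ∫ w(y) e^{t(y-y₀)} dy` and
`w = ξ · e^{-(y-y₀)²/2σ²}` has the same sign pattern as `ξ`. Since `w(y)(y - y₀) ≥ 0`, each
integrand `w(y) e^{t(y-y₀)}` is nondecreasing in `t`, strictly so wherever `w(y) ≠ 0` and `y ≠ y₀`.
Hence `L` is strictly increasing unless `w = 0` a.e., in which case `Ξ ≡ 0`; and a strictly
increasing function vanishes at most once.
-/

open MeasureTheory Real

noncomputable def gaussPdf (σ t : ℝ) : ℝ :=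
  (Real.sqrt (2 * Real.pi * σ ^ 2))⁻¹ * Real.exp (-(t ^ 2) / (2 * σ ^ 2))

theorem gaussPdf_pos {σ : ℝ} (hσ : σ ≠ 0) (t : ℝ) : 0 < gaussPdf σ t := by
  unfold gaussPdf
  positivity

theorem integrable_gaussPdf {σ : ℝ} (hσ : σ ≠ 0) : Integrable (gaussPdf σ) := by
  convert (integrable_exp_neg_mul_sq (b := 1 / (2 * σ ^ 2)) (by positivity)).const_mul
    (√(2 * π * σ ^ 2))⁻¹ using 3 with t
  unfold gaussPdf
  ring_nf

theorem gaussPdf_sub_eq_mul_exp (σ x y y₀ : ℝ) :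
    gaussPdf σ (y - x) = gaussPdf σ (x - y₀) *
      (exp (-(y - y₀) ^ 2 / (2 * σ ^ 2)) * exp ((x - y₀) / σ ^ 2 * (y - y₀))) := by
  rcases eq_or_ne σ 0 with rfl | hσ
  · simp [gaussPdf]
  simp only [gaussPdf, mul_assoc, ← exp_add]
  congr 2
  field_simp
  ring

section GaussianTilt

variable {σ : ℝ} {ξ : ℝ → ℝ} (y₀ : ℝ)

theorem integral_mul_gaussPdf_sub_eq (x : ℝ) :
    ∫ y, ξ y * gaussPdf σ (y - x) = gaussPdf σ (x - y₀) *
      ∫ y, ξ y * exp (-(y - y₀) ^ 2 / (2 * σ ^ 2)) * exp ((x - y₀) / σ ^ 2 * (y - y₀)) := by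
  simp only [gaussPdf_sub_eq_mul_exp σ x _ y₀, ← integral_const_mul]
  congr with y
  ring

theorem integrable_mul_exp_neg_sq_mul_exp (hσ : σ ≠ 0) (hξ : AEStronglyMeasurable ξ)
    {C : ℝ} (hbdd : ∀ y, |ξ y| ≤ C) (t : ℝ) :
    Integrable fun y ↦ ξ y * exp (-(y - y₀) ^ 2 / (2 * σ ^ 2)) * exp (t * (y - y₀)) := by
  obtain ⟨x, rfl⟩ : ∃ x, (x - y₀) / σ ^ 2 = t := ⟨y₀ + σ ^ 2 * t, by field_simp; ring⟩
  refine ((((integrable_gaussPdf hσ).comp_sub_right x).bdd_mul hξ (.of_forall hbdd)).const_mul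
    (gaussPdf σ (x - y₀))⁻¹).congr (.of_forall fun y ↦ ?_)
  simp only [gaussPdf_sub_eq_mul_exp σ x y y₀]
  field_simp [(gaussPdf_pos hσ _).ne']

end GaussianTilt

section SignChange

variable {w : ℝ → ℝ} {y₀ : ℝ}

theorem mul_exp_le_mul_exp_of_sign_change (hneg : ∀ y ≤ y₀, w y ≤ 0)
    (hpos : ∀ y, y₀ ≤ y → 0 ≤ w y) {a b : ℝ} (hab : a ≤ b) (y : ℝ) :
    w y * exp (a * (y - y₀)) ≤ w y * exp (b * (y - y₀)) := by
  rcases le_total y y₀ with hy | hy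
  · exact mul_le_mul_of_nonpos_left (exp_le_exp.2 (by nlinarith)) (hneg y hy)
  · exact mul_le_mul_of_nonneg_left (exp_le_exp.2 (by nlinarith)) (hpos y hy)

theorem strictMono_integral_mul_exp_of_sign_change {μ : Measure ℝ} [NullSingletonClass μ]
    (hneg : ∀ y ≤ y₀, w y ≤ 0) (hpos : ∀ y, y₀ ≤ y → 0 ≤ w y)
    (hint : ∀ t, Integrable (fun y ↦ w y * exp (t * (y - y₀))) μ) (hw : ¬ w =ᵐ[μ] 0) :
    StrictMono fun t ↦ ∫ y, w y * exp (t * (y - y₀)) ∂μ := by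
  intro a b hab
  have hle := mul_exp_le_mul_exp_of_sign_change hneg hpos hab.le
  refine (integral_mono (hint a) (hint b) hle).lt_of_ne fun heq ↦ hw ?_
  filter_upwards [(integral_eq_iff_of_ae_le (hint a) (hint b) (.of_forall hle)).1 heq,
    Measure.ae_ne μ y₀] with y hy hne
  have hexp : exp (a * (y - y₀)) ≠ exp (b * (y - y₀)) := by
    rw [Ne, exp_eq_exp, mul_left_inj' (sub_ne_zero.2 hne)]
    exact hab.ne
  exact (mul_eq_mul_left_iff.1 hy).resolve_left hexp

end SignChange

/-- Oscillation theorem for the Gaussian kernel, case `n = 1`: if `ξ` is measurable and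
bounded, changes sign at most once (nonpositive left of `y₀`, nonnegative right of `y₀`),
and `Ξ(x) = ∫ ξ(y) φ_σ(y − x) dy` is not identically zero, then `Ξ` has at most one zero. -/
theorem oscillation_theorem_one_sign_change
    (σ : ℝ) (hσ : 0 < σ) (ξ : ℝ → ℝ) (hmeas : Measurable ξ)
    (C : ℝ) (hbdd : ∀ y, |ξ y| ≤ C)
    (y0 : ℝ) (hneg : ∀ y ≤ y0, ξ y ≤ 0) (hpos : ∀ y, y0 ≤ y → 0 ≤ ξ y)
    (Ξ : ℝ → ℝ) (hΞ : ∀ x, Ξ x = ∫ y, ξ y * gaussPdf σ (y - x))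
    (hne : ¬ ∀ x, Ξ x = 0) :
    Set.Subsingleton {x : ℝ | Ξ x = 0} := by
  set w : ℝ → ℝ := fun y ↦ ξ y * exp (-(y - y0) ^ 2 / (2 * σ ^ 2))
  set L : ℝ → ℝ := fun t ↦ ∫ y, w y * exp (t * (y - y0))
  have hΞL (x : ℝ) : Ξ x = gaussPdf σ (x - y0) * L ((x - y0) / σ ^ 2) :=
    (hΞ x).trans (integral_mul_gaussPdf_sub_eq y0 x)
  have hw : ¬ w =ᵐ[volume] 0 := fun hw ↦ hne fun x ↦ by
    rw [hΞL, mul_eq_zero]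
    exact .inr (integral_eq_zero_of_ae (hw.mono fun y hy ↦ by simp [hy]))
  have hL : StrictMono L := strictMono_integral_mul_exp_of_sign_change
    (fun y hy ↦ mul_nonpos_of_nonpos_of_nonneg (hneg y hy) (exp_pos _).le)
    (fun y hy ↦ mul_nonneg (hpos y hy) (exp_pos _).le)
    (integrable_mul_exp_neg_sq_mul_exp y0 hσ.ne' hmeas.aestronglyMeasurable hbdd) hw
  have hscale : StrictMono fun x : ℝ ↦ (x - y0) / σ ^ 2 :=
    fun a b hab ↦ div_lt_div_of_pos_right (by linarith) (by positivity)
  intro a ha b hb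
  simp only [Set.mem_ofPred_eq, hΞL, mul_eq_zero, (gaussPdf_pos hσ.ne' _).ne', false_or] at ha hb
  exact (hL.comp hscale).injective (ha.trans hb.symm)
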